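/- arXiv:math/0212347 — 2 statements merged into one kernel-verified Lean document; each statement's English description precedes it below -/
import Mathlib

section
/- Let f be a symmetric polynomial in n variables over ℂ that vanishes whenever b_0+1 of its variables are set equal to 0. Then for any partition λ of n with parts at most k, the evaluated polynomial φ_λ(f) is divisible by ∏_{a=1}^{k} ∏_{j=1}^{m_a(λ)} (x_j^{(a)})^{max(a-b_0,0)}. -/
/-!
By symmetry, a monomial of `f` with at least `b₀ + 1` zero exponents can be permuted so that
its zero exponents sit on the first `b₀ + 1` variables; setting those variables to `0` does not
change its coefficient, which therefore vanishes. Hence every monomial of `f` has at most `b₀`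
zero exponents, so under `φ_λ` each block of `a` variables receives a total exponent of at least
`a - b₀` from every monomial.
-/

open MvPolynomial

/-- `b` groups the `n` variables into blocks: for each index `p = (a, i)` (the `i`-th block
of size `a+1`), exactly `a+1` of the variables are sent to `p`. -/
def IsBlockMap {k n : ℕ} (m : Fin k → ℕ) (b : Fin n → (a : Fin k) × Fin (m a)) : Prop :=
  ∀ p : (a : Fin k) × Fin (m a),
    (Finset.univ.filter fun i => b i = p).card = (p.1 : ℕ) + 1

open Finset

namespace MvPolynomial

variable {σ R : Type*} [CommSemiring R]

theorem prod_X_pow_dvd_iff [Fintype σ] {e : σ → ℕ} {x : MvPolynomial σ R} :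
    (∏ i, X i ^ e i) ∣ x ↔ ∀ d ∈ x.support, ∀ i, e i ≤ d i := by
  classical
  rw [prod_X_pow, ← Ideal.mem_span_singleton,
    ← Set.image_singleton (f := fun s => monomial s (1 : R)), mem_ideal_span_monomial_image]
  simp [Finsupp.le_def]

theorem coeff_aeval_ite_zero_X (P : σ → Prop) [DecidablePred P] (f : MvPolynomial σ R)
    {d : σ →₀ ℕ} (hd : ∀ i, P i → d i = 0) :
    coeff d (aeval (fun i => if P i then (0 : MvPolynomial σ R) else X i) f) = coeff d f := by
  classical
  induction f using MvPolynomial.induction_on' with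
  | monomial u a =>
    rw [aeval_monomial, algebraMap_eq]
    by_cases hu : ∃ i ∈ u.support, P i
    · obtain ⟨i, hi, hPi⟩ := hu
      have hud : u ≠ d := by rintro rfl; exact Finsupp.mem_support_iff.mp hi (hd i hPi)
      rw [Finsupp.prod, prod_eq_zero hi (by simp [hPi, Finsupp.mem_support_iff.mp hi]),
        mul_zero, coeff_zero, coeff_monomial, if_neg hud]
    · push Not at hu
      rw [Finsupp.prod_congr (g2 := fun i k => X i ^ k) fun i hi => by simp [hu i hi],
        ← monomial_eq]
  | add p q hp hq => rw [map_add, coeff_add, coeff_add, hp, hq]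

theorem IsSymmetric.card_filter_eq_zero_lt [Fintype σ] [DecidableEq σ] {f : MvPolynomial σ R}
    (hf : f.IsSymmetric) (P : σ → Prop) [DecidablePred P]
    (hP : aeval (fun i => if P i then (0 : MvPolynomial σ R) else X i) f = 0)
    {u : σ →₀ ℕ} (hu : u ∈ f.support) :
    #{i | u i = 0} < #{i | P i} := by
  by_contra! h
  obtain ⟨Z, hZ, hZcard⟩ := exists_subset_card_eq h
  let e := equivOfCardEq hZcard.symm
  let π : Equiv.Perm σ := e.extendSubtype
  have hπ : ∀ i, P i → u (π i) = 0 := fun i hi => by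
    have hiP : i ∈ ({i | P i} : Finset σ) := by simpa using hi
    rw [e.extendSubtype_apply_of_mem i hiP]
    exact (mem_filter.mp (hZ (e ⟨i, hiP⟩).2)).2
  have hcoeff : coeff (u.mapDomain π.symm) f = coeff u f := by
    conv_lhs => rw [← hf π.symm]
    exact coeff_rename_mapDomain _ π.symm.injective f u
  have := coeff_aeval_ite_zero_X P f (d := u.mapDomain π.symm) fun i hi => by
    simpa [Finsupp.mapDomain_equiv_apply] using hπ i hi
  rw [hP, coeff_zero, hcoeff] at this
  exact mem_support_iff.mp hu this.symm

end MvPolynomial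

theorem Finsupp.card_filter_sub_card_filter_eq_zero_le_mapDomain {σ τ : Type*} [Fintype σ]
    [DecidableEq τ] (b : σ → τ) (u : σ →₀ ℕ) (p : τ) :
    #{i | b i = p} - #{i | u i = 0} ≤ u.mapDomain b p := by
  have hsum : u.mapDomain b p = ∑ i with b i = p, u i := by
    rw [Finsupp.mapDomain, Finsupp.sum_apply, Finsupp.sum_fintype _ _ (by simp), sum_filter]
    simp only [Finsupp.single_apply]
  have hsplit := card_filter_add_card_filter_not (s := {i | b i = p}) fun i => u i = 0
  simp only [← ne_eq] at hsplit
  have hzeros : #{i ∈ {i | b i = p} | u i = 0} ≤ #{i | u i = 0} :=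
    card_le_card fun i => by simp +contextual
  calc #{i | b i = p} - #{i | u i = 0}
      ≤ #{i ∈ {i | b i = p} | u i ≠ 0} := by omega
    _ ≤ ∑ i ∈ {i ∈ {i | b i = p} | u i ≠ 0}, u i := by
        simpa using card_nsmul_le_sum _ u 1 fun i hi =>
          Nat.one_le_iff_ne_zero.mpr (mem_filter.mp hi).2
    _ ≤ ∑ i with b i = p, u i := sum_le_sum_of_subset (filter_subset _ _)
    _ = u.mapDomain b p := hsum.symm

theorem zero_vanishing_divisibility_general (k n b0 : ℕ) (f : MvPolynomial (Fin n) ℂ)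
    (hsym : f.IsSymmetric)
    (hvan : b0 + 1 ≤ n →
      aeval (fun i : Fin n => if (i : ℕ) < b0 + 1 then (0 : MvPolynomial (Fin n) ℂ) else X i)
        f = 0)
    (m : Fin k → ℕ)
    (b : Fin n → (a : Fin k) × Fin (m a)) (hb : IsBlockMap m b) :
    ((∏ p : (a : Fin k) × Fin (m a), X p ^ (((p.1 : ℕ) + 1) - b0)) :
        MvPolynomial ((a : Fin k) × Fin (m a)) ℂ)
      ∣ aeval (fun i => X (b i)) f := by
  classical
  have hzeros : ∀ u ∈ f.support, #{i | u i = 0} ≤ b0 := fun u hu => by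
    by_cases hn : b0 + 1 ≤ n
    · have hlt := IsSymmetric.card_filter_eq_zero_lt hsym _ (hvan hn) hu
      rw [Fin.card_filter_val_lt, min_eq_right hn] at hlt
      omega
    · exact (card_filter_le _ _).trans (by rw [card_univ, Fintype.card_fin]; omega)
  rw [← Function.comp_def X b, ← rename_eq_aeval]
  refine prod_X_pow_dvd_iff.mpr fun d hd p => ?_
  obtain ⟨u, rfl, hu⟩ := coeff_rename_ne_zero b f d (mem_support_iff.mp hd)
  have hu0 := hzeros u (mem_support_iff.mpr hu)
  calc (p.1 : ℕ) + 1 - b0 ≤ #{i | b i = p} - #{i | u i = 0} := by rw [hb p]; omega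
    _ ≤ u.mapDomain b p := Finsupp.card_filter_sub_card_filter_eq_zero_le_mapDomain b u p

/-- Let `f` be a symmetric polynomial in `n` variables over `ℂ` vanishing
whenever `b₀ + 1` of its variables are set equal to `0`.  Then for any partition `λ` of `n`
with parts at most `k` (multiplicities `m`), and any block evaluation `φ_λ` determined by a
block map `b`, the evaluated polynomial `φ_λ(f)` is divisible by
`∏_{a=1}^{k} ∏_{j=1}^{m_a} (x_j^{(a)})^{max (a - b₀) 0}`. -/
theorem zero_vanishing_divisibility (k n b0 : ℕ) (f : MvPolynomial (Fin n) ℂ)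
    (hsym : f.IsSymmetric)
    (hvan : b0 + 1 ≤ n →
      aeval (fun i : Fin n => if (i : ℕ) < b0 + 1 then (0 : MvPolynomial (Fin n) ℂ) else X i)
        f = 0)
    (m : Fin k → ℕ) (hm : ∑ a : Fin k, ((a : ℕ) + 1) * m a = n)
    (b : Fin n → (a : Fin k) × Fin (m a)) (hb : IsBlockMap m b) :
    ((∏ p : (a : Fin k) × Fin (m a), X p ^ (((p.1 : ℕ) + 1) - b0)) :
        MvPolynomial ((a : Fin k) × Fin (m a)) ℂ)
      ∣ aeval (fun i => X (b i)) f :=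
  zero_vanishing_divisibility_general k n b0 f hsym hvan m b hb
end

section
/- Let γ_a = Σ_{j=1}^a β_j (componentwise sum of the sequences β_j of the previous construction, for odd k = 2l+1 including the middle sequence α with α_{2m} = √3 ε_0, α_{2m+1} = ε_0). Then the contraction function satisfies g(z,w;γ_a,γ_b) = (z−w)^{2 min(a,b)} if a+b ≤ k, and g(z,w;γ_a,γ_b) = (z−w)^{2 min(a,b)}(z+w)^{a+b−k} if a+b > k. -/
/-!
With `s = (-1)^m`, the vectors `β_{i,m}` are even in `m` and pair as
`⟨β_{i,m}, β_{j,m}⟩ = 2 δ_{i,j} + s δ_{i+j,k-1}`: the middle vector has square norm `3 = 2 + 1`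
for even `m` and `1 = 2 - 1` for odd `m`. Summing over `i ≤ a`, `j ≤ b` (zero-based) gives
`⟨γ_{a,m}, γ_{b,-m}⟩ = 2 (min(a,b) + 1) + s (a + b + 2 - k)₊`.

The series `exp(-Σ c_m t^m / m)` is the solution with constant term `1` of
`G' = -(Σ c_{m+1} t^m) G`, so it turns sums of coefficient sequences into products; the constant
sequence `1` gives `1 - t` and the sequence `(-1)^m` gives `1 + t`.
-/

noncomputable section

/-- Coefficients of `exp(−Σ_{m≥1} c_m t^m / m)`. -/
def gcoef (c : ℕ → ℂ) : ℕ → ℂ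
  | 0 => 1
  | n + 1 => (-(1 : ℂ) / (n + 1)) * ∑ j ∈ Finset.range (n + 1), c (j + 1) * gcoef c (n - j)
decreasing_by exact Nat.lt_succ_of_le (Nat.sub_le n j)

/-- The contraction series `exp(−Σ_{m≥1} c_m t^m / m)` with `t = w/z`; the contraction
function is `g(z,w;α,β) = z^{⟨α_0,β^0⟩} · contrS c (w/z)` with `c m = ⟨α_m, β_{−m}⟩`. -/
def contrS (c : ℕ → ℂ) : PowerSeries ℂ := PowerSeries.mk (gcoef c)

/-- The sequences `β_a` for odd `k = 2l+1` (`a` zero-based): `β_{a,m} = ε_{a+1}^+` for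
`a < l`; the middle sequence `β_{l,m} = √3 ε_0` for even `m`, `ε_0` for odd `m`; and
`β_{a,m} = (−1)^m ε_{k−a}^-` for `a > l`. -/
def bseqOdd {V : Type*} [AddCommGroup V] [Module ℂ V] (l : ℕ) (ε0 : V) (εp εm : Fin l → V)
    (a : Fin (2 * l + 1)) (m : ℤ) : V :=
  if h : (a : ℕ) < l then εp ⟨a, h⟩
  else if h2 : (a : ℕ) = l then
    (if m % 2 = 0 then ((Real.sqrt 3 : ℝ) : ℂ) • ε0 else ε0)
  else ((-1 : ℂ) ^ m) • εm ⟨2 * l - a, by have := a.isLt; omega⟩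

/-- `γ_a = Σ_{j ≤ a} β_j` (componentwise sums of the sequences). -/
def gseq {V : Type*} [AddCommGroup V] [Module ℂ V] (l : ℕ) (ε0 : V) (εp εm : Fin l → V)
    (a : Fin (2 * l + 1)) (m : ℤ) : V :=
  ∑ j ∈ Finset.univ.filter (fun j : Fin (2 * l + 1) => j ≤ a), bseqOdd l ε0 εp εm j m

open PowerSeries

theorem PowerSeries.eq_of_derivative_eq_mul {K : Type*} [Field K] [CharZero K] {A F G : K⟦X⟧}
    (hF : d⁄dX K F = A * F) (hG : d⁄dX K G = A * G)
    (h0 : constantCoeff F = constantCoeff G) (hG0 : constantCoeff G ≠ 0) : F = G := by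
  have hGinv : G⁻¹ * G = 1 := PowerSeries.inv_mul_cancel G hG0
  have hquot : F * G⁻¹ = 1 := by
    refine derivative.ext ?_ (by simp [h0, hG0])
    rw [Derivation.leibniz, derivative_inv', hF, hG, derivative_one, smul_eq_mul, smul_eq_mul]
    linear_combination (-(F * G⁻¹ * A)) * hGinv
  calc F = F * G⁻¹ * G := by rw [mul_assoc, hGinv, mul_one]
    _ = G := by rw [hquot, one_mul]

lemma constantCoeff_contrS (c : ℕ → ℂ) : constantCoeff (contrS c) = 1 := by
  rw [← coeff_zero_eq_constantCoeff_apply, contrS, coeff_mk, gcoef]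

lemma derivative_contrS (c : ℕ → ℂ) :
    d⁄dX ℂ (contrS c) = -(mk fun n => c (n + 1)) * contrS c := by
  ext n
  rw [coeff_derivative, neg_mul, map_neg, coeff_mul,
    Finset.Nat.sum_antidiagonal_eq_sum_range_succ_mk]
  simp only [contrS, coeff_mk]
  rw [gcoef]
  field_simp

lemma eq_contrS_of_derivative {c : ℕ → ℂ} {G : ℂ⟦X⟧} (h0 : constantCoeff G = 1)
    (hG : d⁄dX ℂ G = -(mk fun n => c (n + 1)) * G) : G = contrS c :=
  eq_of_derivative_eq_mul hG (derivative_contrS c) (by rw [h0, constantCoeff_contrS])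
    (by simp [constantCoeff_contrS])

lemma contrS_add (c d : ℕ → ℂ) : contrS (c + d) = contrS c * contrS d := by
  refine (eq_contrS_of_derivative (by simp [constantCoeff_contrS]) ?_).symm
  have hmk : (mk fun n => (c + d) (n + 1)) = mk (fun n => c (n + 1)) + mk fun n => d (n + 1) := by
    ext; simp
  rw [Derivation.leibniz, derivative_contrS, derivative_contrS, hmk, smul_eq_mul, smul_eq_mul]
  ring

lemma contrS_zero : contrS 0 = 1 :=
  (eq_contrS_of_derivative (by simp) (by ext; simp)).symm

lemma contrS_nsmul (n : ℕ) (c : ℕ → ℂ) : contrS (n • c) = contrS c ^ n := by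
  induction n with
  | zero => rw [zero_smul, contrS_zero, pow_zero]
  | succ n ih => rw [succ_nsmul, contrS_add, ih, pow_succ]

lemma contrS_one : contrS 1 = 1 - X := by
  refine (eq_contrS_of_derivative (by simp) ?_).symm
  rw [map_sub, derivative_one, derivative_X, Pi.one_def, ← Pi.one_def, neg_mul,
    mk_one_mul_one_sub_eq_one]
  ring

lemma contrS_neg_one_pow : contrS (fun m => (-1) ^ m) = 1 + X := by
  refine (eq_contrS_of_derivative (by simp) ?_).symm
  have h : (mk fun n => (-1 : ℂ) ^ n) * (1 + X) = 1 := by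
    simpa [rescale_mk, sub_eq_add_neg] using
      congrArg (rescale (-1 : ℂ)) (mk_one_mul_one_sub_eq_one ℂ)
  have hneg : (mk fun n => (-1 : ℂ) ^ (n + 1)) = -mk fun n => (-1) ^ n := by
    ext; simp [pow_succ]
  rw [map_add, derivative_one, derivative_X, hneg, neg_neg, h, zero_add]

lemma contrS_natCast_add_mul_neg_one_pow (p q : ℕ) :
    contrS (fun m => (p : ℂ) + q * (-1) ^ m) = (1 - X) ^ p * (1 + X) ^ q := by
  have : (fun m => (p : ℂ) + q * (-1) ^ m) = p • 1 + q • fun m => (-1) ^ m := by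
    ext; simp
  rw [this, contrS_add, contrS_nsmul, contrS_nsmul, contrS_one, contrS_neg_one_pow]

open Finset

lemma Finset.sum_sum_ite_eq_card_filter {ι R : Type*} [DecidableEq ι] [AddCommMonoidWithOne R]
    (s t : Finset ι) (f : ι → ι) :
    ∑ j ∈ t, ∑ i ∈ s, (if j = f i then (1 : R) else 0) = #{i ∈ s | f i ∈ t} := by
  rw [sum_comm]
  simp only [sum_ite_eq', sum_boole]

lemma Fin.card_filter_mem_Iic {n : ℕ} (a b : Fin n) :
    #{i ∈ Iic a | i ∈ Iic b} = min (a : ℕ) b + 1 := by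
  have : ({i ∈ Iic a | i ∈ Iic b} : Finset (Fin n)) = Iic (min a b) := by
    ext i; simp only [mem_filter, mem_Iic, le_min_iff]
  rw [this, Fin.card_Iic, Fin.coe_min]

lemma Fin.card_filter_rev_mem_Iic {n : ℕ} (a b : Fin n) :
    #{i ∈ Iic a | i.rev ∈ Iic b} = a + b + 2 - n := by
  have : ({i ∈ Iic a | i.rev ∈ Iic b} : Finset (Fin n)) = Icc b.rev a := by
    ext i; simp only [mem_filter, mem_Iic, mem_Icc, Fin.rev_le_iff]; tauto
  rw [this, Fin.card_Icc, Fin.val_rev]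
  omega

structure OddGramRelations {l : ℕ} {V : Type*} [AddCommGroup V] [Module ℂ V]
    (B : V →ₗ[ℂ] V →ₗ[ℂ] ℂ) (ε0 : V) (εp εm : Fin l → V) : Prop where
  symm : ∀ v w, B v w = B w v
  zero_zero : B ε0 ε0 = 1
  plus_plus : ∀ a b, B (εp a) (εp b) = if a = b then 2 else 0
  minus_minus : ∀ a b, B (εm a) (εm b) = if a = b then 2 else 0
  plus_minus : ∀ a b, B (εp a) (εm b) = if a = b then 1 else 0
  zero_plus : ∀ a, B ε0 (εp a) = 0
  zero_minus : ∀ a, B ε0 (εm a) = 0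

section OddFrame

variable {l : ℕ} {V : Type*} [AddCommGroup V] [Module ℂ V] {ε0 : V} {εp εm : Fin l → V}
  {B : V →ₗ[ℂ] V →ₗ[ℂ] ℂ}

lemma bseqOdd_of_lt {a : Fin (2 * l + 1)} (h : (a : ℕ) < l) (m : ℤ) :
    bseqOdd l ε0 εp εm a m = εp ⟨a, h⟩ := by
  rw [bseqOdd, dif_pos h]

lemma bseqOdd_of_eq {a : Fin (2 * l + 1)} (h : (a : ℕ) = l) (m : ℤ) :
    bseqOdd l ε0 εp εm a m = (if Even m then ((√3 : ℝ) : ℂ) else 1) • ε0 := by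
  simp only [bseqOdd, dif_neg h.not_lt, dif_pos h, Int.even_iff, ite_smul, one_smul]

lemma bseqOdd_of_gt {a : Fin (2 * l + 1)} (h : l < (a : ℕ)) (m : ℤ) :
    bseqOdd l ε0 εp εm a m = (-1 : ℂ) ^ m • εm ⟨2 * l - a, by omega⟩ := by
  rw [bseqOdd, dif_neg (by omega), dif_neg (by omega)]

lemma bseqOdd_neg (a : Fin (2 * l + 1)) (m : ℤ) :
    bseqOdd l ε0 εp εm a (-m) = bseqOdd l ε0 εp εm a m := by
  rcases lt_trichotomy (a : ℕ) l with h | h | h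
  · simp only [bseqOdd_of_lt h]
  · simp only [bseqOdd_of_eq h, even_neg]
  · simp only [bseqOdd_of_gt h, neg_one_zpow_eq_ite, even_neg]

lemma OddGramRelations.pairing_bseqOdd (hB : OddGramRelations B ε0 εp εm)
    (i j : Fin (2 * l + 1)) (m : ℤ) :
    B (bseqOdd l ε0 εp εm i m) (bseqOdd l ε0 εp εm j m) =
      2 * (if j = i then 1 else 0) + (-1) ^ m * (if j = i.rev then 1 else 0) := by
  have hsq : (-1 : ℂ) ^ m * (-1) ^ m = 1 := by rw [← mul_zpow]; simp
  have hmid : (if Even m then ((√3 : ℝ) : ℂ) else 1) * (if Even m then ((√3 : ℝ) : ℂ) else 1)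
      = 2 + (-1) ^ m := by
    rcases m.even_or_odd with hm | hm
    · rw [if_pos hm, ← Complex.ofReal_mul, Real.mul_self_sqrt (by norm_num), hm.neg_one_zpow]
      norm_num
    · rw [if_neg (Int.not_even_iff_odd.mpr hm), hm.neg_one_zpow]
      norm_num
  have hzero_plus a : B (εp a) ε0 = 0 := by rw [hB.symm, hB.zero_plus]
  have hzero_minus a : B (εm a) ε0 = 0 := by rw [hB.symm, hB.zero_minus]
  have hminus_plus a b : B (εm a) (εp b) = if b = a then 1 else 0 := by rw [hB.symm, hB.plus_minus]
  have hrev : ∀ {x y : Fin (2 * l + 1)}, y = x.rev ↔ (x : ℕ) + y = 2 * l := by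
    intro x y; rw [Fin.ext_iff, Fin.val_rev]; omega
  rcases lt_trichotomy (i : ℕ) l with hi | hi | hi <;>
    rcases lt_trichotomy (j : ℕ) l with hj | hj | hj <;>
    simp only [bseqOdd_of_lt, bseqOdd_of_eq, bseqOdd_of_gt, hi, hj, map_smul, LinearMap.smul_apply,
      smul_eq_mul, hB.plus_plus, hB.minus_minus, hB.plus_minus, hB.zero_plus, hB.zero_minus, hmid,
      hzero_plus, hzero_minus, hminus_plus, hB.zero_zero, mul_one, hrev, Fin.ext_iff]
  all_goals split_ifs <;> first | omega | linear_combination 2 * hsq | ring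


lemma gseq_eq_sum_Iic (a : Fin (2 * l + 1)) (m : ℤ) :
    gseq l ε0 εp εm a m = ∑ j ∈ Iic a, bseqOdd l ε0 εp εm j m := by
  rw [gseq, filter_ge_eq_Iic]

lemma OddGramRelations.pairing_gseq_neg (hB : OddGramRelations B ε0 εp εm)
    (a b : Fin (2 * l + 1)) (m : ℤ) :
    B (gseq l ε0 εp εm a m) (gseq l ε0 εp εm b (-m)) =
      ((2 * (min (a : ℕ) b + 1) : ℕ) : ℂ) + ((a + b + 2 - (2 * l + 1) : ℕ) : ℂ) * (-1) ^ m := by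
  simp only [gseq_eq_sum_Iic, bseqOdd_neg, map_sum, LinearMap.sum_apply, hB.pairing_bseqOdd,
    sum_add_distrib, ← mul_sum, sum_sum_ite_eq_card_filter,
    Fin.card_filter_mem_Iic, Fin.card_filter_rev_mem_Iic]
  push_cast
  ring

end OddFrame

/-- For `γ_a = Σ_{j=1}^a β_j` (odd `k = 2l+1`, including the middle
sequence with `α_{2m} = √3 ε_0`, `α_{2m+1} = ε_0`), the contraction function satisfies
`g(z,w;γ_a,γ_b) = (z−w)^{2 min(a,b)}` if `a + b ≤ k`, and
`g(z,w;γ_a,γ_b) = (z−w)^{2 min(a,b)} (z+w)^{a+b−k}` if `a + b > k`: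
the `z`-exponent `⟨γ_{a,0}, γ_b^0⟩` equals `2 min(a,b) + (a+b−k)₊` and the contraction
series equals `(1−t)^{2 min(a,b)} (1+t)^{(a+b−k)₊}`. -/
theorem contraction_gamma_odd (l : ℕ) (V : Type*) [AddCommGroup V] [Module ℂ V]
    (B : V →ₗ[ℂ] V →ₗ[ℂ] ℂ) (hBsymm : ∀ v w, B v w = B w v)
    (ε0 : V) (εp εm : Fin l → V)
    (h00 : B ε0 ε0 = 1)
    (hpp : ∀ a b, B (εp a) (εp b) = if a = b then 2 else 0)
    (hmm : ∀ a b, B (εm a) (εm b) = if a = b then 2 else 0)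
    (hpm : ∀ a b, B (εp a) (εm b) = if a = b then 1 else 0)
    (h0p : ∀ a, B ε0 (εp a) = 0) (h0m : ∀ a, B ε0 (εm a) = 0)
    (a b : Fin (2 * l + 1)) :
    B (gseq l ε0 εp εm a 0) (gseq l ε0 εp εm b 0) =
      ((2 * (min (a : ℕ) (b : ℕ) + 1) + (((a : ℕ) + (b : ℕ) + 2) - (2 * l + 1)) : ℕ) : ℂ) ∧
    contrS (fun m => B (gseq l ε0 εp εm a (m : ℤ)) (gseq l ε0 εp εm b (-(m : ℤ)))) =
      (1 - PowerSeries.X : PowerSeries ℂ) ^ (2 * (min (a : ℕ) (b : ℕ) + 1)) *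
        (1 + PowerSeries.X : PowerSeries ℂ) ^ (((a : ℕ) + (b : ℕ) + 2) - (2 * l + 1)) := by
  have hB : OddGramRelations B ε0 εp εm := ⟨hBsymm, h00, hpp, hmm, hpm, h0p, h0m⟩
  constructor
  · simpa using hB.pairing_gseq_neg a b 0
  · simp_rw [hB.pairing_gseq_neg, zpow_natCast]
    exact contrS_natCast_add_mul_neg_one_pow _ _
end
end
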